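/- If the supply graph G is a cycle, H is simple, and (G, H) has the uniqueness property, then |L| ≤ 4. -/

import Mathlib

open scoped Classical
open MeasureTheory

/-- The positive (counterclockwise) route of the OD-pair `(o, d)` on the cycle with
vertex set `ZMod n` contains the positive arc at edge `v` (the arc from `v` to `v + 1`)
iff `posRoute n o d v` holds. -/
def posRoute (n : ℕ) (o d v : ZMod n) : Prop := (v - o).val < (d - o).val

/-- The negative (clockwise) route of `(o, d)` contains the negative arc at edge `v`
(the arc from `v + 1` to `v`) iff `negRoute n o d v` holds. -/
def negRoute (n : ℕ) (o d v : ZMod n) : Prop := (v - d).val < (o - d).val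

/-- An arc of the directed version of the cycle is a pair `(v, b)`: for `b = true` the
positive arc `v → v + 1`, for `b = false` the negative arc `v + 1 → v`.
`inRoute n o d b a` says that arc `a` lies on the route of direction `b` of the
OD-pair `(o, d)`. -/
def inRoute (n : ℕ) (o d : ZMod n) (b : Bool) (a : ZMod n × Bool) : Prop :=
  a.2 = b ∧ (if b then posRoute n o d a.1 else negRoute n o d a.1)

/-- Flow induced on arc `a` by the strategy profile `σ` (`σ i = true` means that
user `i` chooses their positive route, `σ i = false` their negative route). -/
noncomputable def flow {I : Type} [MeasurableSpace I] (μ : Measure I) (n : ℕ)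
    (od : I → ZMod n × ZMod n) (σ : I → Bool) (a : ZMod n × Bool) : ℝ :=
  (μ {i | inRoute n (od i).1 (od i).2 (σ i) a}).toReal

/-- The cost, for user `i`, of their route in direction `b`, given arc flows `f`:
the sum over the arcs of that route of the user-specific arc costs. -/
noncomputable def routeCost {I : Type} (n : ℕ) [NeZero n]
    (c : I → ZMod n × Bool → ℝ → ℝ) (f : ZMod n × Bool → ℝ)
    (od : I → ZMod n × ZMod n) (i : I) (b : Bool) : ℝ :=
  ∑ a ∈ Finset.univ.filter (fun a : ZMod n × Bool => inRoute n (od i).1 (od i).2 b a),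
    c i a (f a)

/-- `σ` is a Nash equilibrium: every user's chosen route is a minimal-cost route
given the induced flows. -/
def IsEquilibrium {I : Type} [MeasurableSpace I] (μ : Measure I) (n : ℕ) [NeZero n]
    (od : I → ZMod n × ZMod n) (c : I → ZMod n × Bool → ℝ → ℝ) (σ : I → Bool) : Prop :=
  ∀ (i : I) (b : Bool),
    routeCost n c (flow μ n od σ) od i (σ i) ≤ routeCost n c (flow μ n od σ) od i b

/-- The pair `(G, H)` (cycle on `ZMod n`, demand digraph with arc set `L`) has the
uniqueness property: for every nonatomic population partitioned according to its
OD-pairs and every assignment of strictly increasing continuous nonnegative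
user-specific cost functions, all Nash equilibria induce the same arc flows. -/
def UniquenessProperty (n : ℕ) [NeZero n] (L : Finset (ZMod n × ZMod n)) : Prop :=
  ∀ (I : Type) (m : MeasurableSpace I) (μ : @Measure I m),
    @IsFiniteMeasure I m μ →
    ∀ od : I → ZMod n × ZMod n, (∀ i, od i ∈ L) →
    ∀ c : I → ZMod n × Bool → ℝ → ℝ,
      (∀ i a, StrictMono (c i a)) → (∀ i a, Continuous (c i a)) →
      (∀ i a x, 0 ≤ c i a x) →
    ∀ σ σ' : I → Bool,
      (∀ a, @MeasurableSet I m {i | inRoute n (od i).1 (od i).2 (σ i) a}) →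
      (∀ a, @MeasurableSet I m {i | inRoute n (od i).1 (od i).2 (σ' i) a}) →
      @IsEquilibrium I m μ n _ od c σ → @IsEquilibrium I m μ n _ od c σ' →
      ∀ a : ZMod n × Bool, @flow I m μ n od σ a = @flow I m μ n od σ' a


/-!
Every edge of the cycle lies on exactly one of the two routes of an OD-pair, and an OD-pair is
determined by the set of edges on its positive route. Among five OD-pairs, three, say
`p₀ p₁ p₂`, use edge `0` in a common direction `s`; since they are distinct, one of them
(`p₀`) agrees with each of the other two at an edge where the third one differs. With users of
weights `3, 2, 2` on these pairs, threshold costs make both "`p₀` alone takes direction `s`" and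
"`p₁, p₂` take direction `s`, `p₀` the other one" equilibria; they put flows `3` and `4` on the
arc `(0, s)`, contradicting uniqueness.
-/

open Real
open scoped NNReal

theorem ZMod.val_sub_add_val_eq_or {n : ℕ} [NeZero n] (a b : ZMod n) :
    (a - b).val + b.val = a.val ∨ (a - b).val + b.val = a.val + n := by
  rcases lt_or_ge ((a - b).val + b.val) n with h | h
  · left
    rw [← ZMod.val_add_of_lt h, sub_add_cancel]
  · right
    rw [ZMod.val_add_val_of_le h, sub_add_cancel]

section Routes

variable {n : ℕ}

theorem posRoute_self {o d : ZMod n} (h : o ≠ d) : posRoute n o d o := by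
  simpa [posRoute] using ZMod.val_pos.mpr (sub_ne_zero.mpr h.symm)

theorem not_posRoute_right (o d : ZMod n) : ¬ posRoute n o d d := lt_irrefl _

variable [NeZero n]

theorem negRoute_iff_not_posRoute {o d : ZMod n} (h : o ≠ d) (v : ZMod n) :
    negRoute n o d v ↔ ¬ posRoute n o d v := by
  have hk : d - o ≠ 0 := sub_ne_zero.mpr h.symm
  have hkpos : 0 < (d - o).val := ZMod.val_pos.mpr hk
  have hneg : (o - d).val = n - (d - o).val := by
    rw [← neg_sub, ZMod.neg_val, if_neg hk]
  have hsplit := ZMod.val_sub_add_val_eq_or (v - o) (d - o)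
  rw [sub_sub_sub_cancel_right] at hsplit
  have := ZMod.val_lt (v - o)
  have := ZMod.val_lt (v - d)
  unfold negRoute posRoute
  rw [hneg]
  omega

/-- By `inRoute_iff_routeDir`, every edge `v` lies on exactly one route of `(o, d)`;
`routeDir n o d v` is its direction (`true` for the positive route). -/
noncomputable def routeDir (n : ℕ) (o d v : ZMod n) : Bool := decide (posRoute n o d v)

theorem inRoute_iff_routeDir {o d : ZMod n} (h : o ≠ d) (b : Bool) (a : ZMod n × Bool) :
    inRoute n o d b a ↔ a.2 = b ∧ routeDir n o d a.1 = b := by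
  cases b <;> simp [inRoute, routeDir, negRoute_iff_not_posRoute h]

/-- If the intervals `[o, d)` and `[o', d')` coincide but `o ≠ o'`, then together they
cover the whole cycle, in particular `d`. -/
theorem eq_of_posRoute_eq {o d o' d' : ZMod n} (hod : o ≠ d) (hod' : o' ≠ d')
    (h : posRoute n o d = posRoute n o' d') : o = o' := by
  by_contra hne
  have h₁ : posRoute n o' d' o := h ▸ posRoute_self hod
  have h₂ : posRoute n o d o' := h ▸ posRoute_self hod'
  have h₃ : ¬ posRoute n o' d' d := h ▸ not_posRoute_right o d
  have hneg : (o' - o).val = n - (o - o').val := by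
    rw [← neg_sub, ZMod.neg_val, if_neg (sub_ne_zero.mpr hne)]
  have hsplit := ZMod.val_sub_add_val_eq_or (d - o') (o - o')
  rw [sub_sub_sub_cancel_right] at hsplit
  have := ZMod.val_lt (d - o)
  have := ZMod.val_lt (d - o')
  unfold posRoute at h₁ h₂ h₃
  rw [hneg] at h₂
  omega

theorem routeDir_injOn :
    Set.InjOn (fun p : ZMod n × ZMod n => routeDir n p.1 p.2) {p | p.1 ≠ p.2} := by
  rintro ⟨o, d⟩ hod ⟨o', d'⟩ hod' h
  have hpos : posRoute n o d = posRoute n o' d' :=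
    funext fun v => by simpa [routeDir] using congrFun h v
  obtain rfl := eq_of_posRoute_eq hod hod' hpos
  have h₁ : ¬ posRoute n o d' d := hpos ▸ not_posRoute_right o d
  have h₂ : ¬ posRoute n o d d' := hpos ▸ not_posRoute_right o d'
  unfold posRoute at h₁ h₂
  have : d - o = d' - o := ZMod.val_injective n (by omega)
  simp_all

end Routes

section OddOneOut

variable {α : Type*} {f g h : α → Bool}

def IsOddOneOut (f g h : α → Bool) : Prop := ∃ v, f v ≠ g v ∧ f v ≠ h v

theorem isOddOneOut_comm : IsOddOneOut f g h ↔ IsOddOneOut f h g := by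
  simp only [IsOddOneOut, and_comm]

theorem IsOddOneOut.or_of_ne (hfg : f ≠ g) (h : α → Bool) :
    IsOddOneOut f g h ∨ IsOddOneOut g f h := by
  obtain ⟨v, hv⟩ := Function.ne_iff.mp hfg
  rcases Bool.eq_or_eq_not (h v) (f v) with hh | hh
  · exact Or.inr ⟨v, hv.symm, by rw [hh]; exact hv.symm⟩
  · exact Or.inl ⟨v, hv, by rw [hh]; exact (Bool.not_ne_self _).symm⟩

def IsPivot (f g h : α → Bool) : Prop := IsOddOneOut g f h ∧ IsOddOneOut h f g

theorem isPivot_or_isPivot_or_isPivot (hfg : f ≠ g) (hfh : f ≠ h) (hgh : g ≠ h) :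
    IsPivot f g h ∨ IsPivot g f h ∨ IsPivot h f g := by
  have := IsOddOneOut.or_of_ne hfg h
  have := IsOddOneOut.or_of_ne hfh g
  have := IsOddOneOut.or_of_ne hgh f
  unfold IsPivot
  rw [@isOddOneOut_comm _ g h f, @isOddOneOut_comm _ h g f] at *
  tauto

end OddOneOut

section SwitchCost

variable {n : ℕ} [NeZero n]

noncomputable def routeArcs (n : ℕ) [NeZero n] (p : ZMod n × ZMod n) (b : Bool) :
    Finset (ZMod n × Bool) :=
  Finset.univ.filter (inRoute n p.1 p.2 b)

theorem routeCost_eq_sum {I : Type} (c : I → ZMod n × Bool → ℝ → ℝ) (f : ZMod n × Bool → ℝ)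
    (od : I → ZMod n × ZMod n) (i : I) (b : Bool) :
    routeCost n c f od i b = ∑ a ∈ routeArcs n (od i) b, c i a (f a) :=
  rfl

theorem mem_routeArcs {p : ZMod n × ZMod n} (hp : p.1 ≠ p.2) {b : Bool} {a : ZMod n × Bool} :
    a ∈ routeArcs n p b ↔ a.2 = b ∧ routeDir n p.1 p.2 a.1 = b := by
  simp [routeArcs, inRoute_iff_routeDir hp]

theorem routeArcs_nonempty {p : ZMod n × ZMod n} (hp : p.1 ≠ p.2) (b : Bool) :
    (routeArcs n p b).Nonempty := by
  cases b
  · exact ⟨(p.2, false),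
      (mem_routeArcs hp).mpr ⟨rfl, by simpa [routeDir] using not_posRoute_right p.1 p.2⟩⟩
  · exact ⟨(p.1, true), (mem_routeArcs hp).mpr ⟨rfl, by simpa [routeDir] using posRoute_self hp⟩⟩

/-- The route through `g` costs about `exp` of the flow on `g`, the other route exactly the
midpoint of `exp u` and `exp (u + 1)`; the `δ`-terms only make every arc cost strictly
increasing. -/
noncomputable def switchCost (n : ℕ) [NeZero n] (p : ZMod n × ZMod n) (g : ZMod n × Bool)
    (u δ : ℝ) (a : ZMod n × Bool) (x : ℝ) : ℝ :=
  if a = g then exp x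
  else (if a.2 = g.2 then 0 else (exp u + exp (u + 1)) / (2 * (routeArcs n p (!g.2)).card))
    + δ * exp x

variable {p : ZMod n × ZMod n} {g : ZMod n × Bool} {u δ : ℝ}

theorem switchCost_strictMono (hδ : 0 < δ) (a : ZMod n × Bool) :
    StrictMono (switchCost n p g u δ a) := by
  intro x y hxy
  unfold switchCost
  split
  · exact exp_lt_exp.2 hxy
  · gcongr

theorem switchCost_continuous (a : ZMod n × Bool) : Continuous (switchCost n p g u δ a) := by
  unfold switchCost
  split <;> fun_prop

theorem switchCost_nonneg (hδ : 0 ≤ δ) (a : ZMod n × Bool) (x : ℝ) :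
    0 ≤ switchCost n p g u δ a x := by
  unfold switchCost
  split
  · positivity
  · split <;> positivity

theorem sum_switchCost_self (hg : g ∈ routeArcs n p g.2) (f : ZMod n × Bool → ℝ) :
    ∑ a ∈ routeArcs n p g.2, switchCost n p g u δ a (f a)
      = exp (f g) + δ * ∑ a ∈ (routeArcs n p g.2).erase g, exp (f a) := by
  rw [← Finset.add_sum_erase _ _ hg, Finset.mul_sum]
  congr 1
  · simp [switchCost]
  · refine Finset.sum_congr rfl fun a ha => ?_
    obtain ⟨hag, ha⟩ := Finset.mem_erase.mp ha
    have : a.2 = g.2 := (Finset.mem_filter.mp ha).2.1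
    simp [switchCost, hag, this]

theorem sum_switchCost_not (hp : p.1 ≠ p.2) (f : ZMod n × Bool → ℝ) :
    ∑ a ∈ routeArcs n p (!g.2), switchCost n p g u δ a (f a)
      = (exp u + exp (u + 1)) / 2 + δ * ∑ a ∈ routeArcs n p (!g.2), exp (f a) := by
  have hcard : ((routeArcs n p (!g.2)).card : ℝ) ≠ 0 := by
    exact_mod_cast (routeArcs_nonempty hp _).card_pos.ne'
  have hterm : ∀ a ∈ routeArcs n p (!g.2), switchCost n p g u δ a (f a)
      = (exp u + exp (u + 1)) / (2 * (routeArcs n p (!g.2)).card) + δ * exp (f a) := by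
    intro a ha
    have : a.2 = !g.2 := (Finset.mem_filter.mp ha).2.1
    have hag : a ≠ g := fun h => by simp [h] at this
    simp [switchCost, hag, this]
  rw [Finset.sum_congr rfl hterm, Finset.sum_add_distrib, Finset.sum_const, nsmul_eq_mul,
    Finset.mul_sum]
  field_simp

theorem mul_sum_exp_le_half {f : ZMod n × Bool → ℝ} {M : ℝ} (hf : ∀ a, f a ≤ M)
    (S : Finset (ZMod n × Bool)) : (4 * n * exp M)⁻¹ * ∑ a ∈ S, exp (f a) ≤ 1 / 2 := by
  have hcard : (S.card : ℝ) ≤ 2 * n := by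
    have := S.card_le_univ
    rw [Fintype.card_prod, ZMod.card, Fintype.card_bool] at this
    exact_mod_cast this.trans_eq (mul_comm _ _)
  have hsum : ∑ a ∈ S, exp (f a) ≤ S.card * exp M := by
    simpa using Finset.sum_le_card_nsmul S _ _ fun a _ => exp_le_exp.2 (hf a)
  have hn : (0 : ℝ) < n := by exact_mod_cast Nat.pos_of_neZero n
  rw [inv_mul_le_iff₀ (by positivity)]
  nlinarith [exp_pos M]

theorem exp_add_one_le_exp_add_one {u : ℝ} (hu : 0 ≤ u) : exp u + 1 ≤ exp (u + 1) := by
  have h₁ : 1 ≤ exp u := one_le_exp hu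
  have h₂ : 2 ≤ exp 1 := by linarith [add_one_le_exp (1 : ℝ)]
  rw [exp_add]
  nlinarith

end SwitchCost

section Equilibrium

variable {n : ℕ} {I : Type} [MeasurableSpace I] (μ : Measure I) [IsFiniteMeasure μ]

theorem flow_le_measure_univ (od : I → ZMod n × ZMod n) (σ : I → Bool) (a : ZMod n × Bool) :
    flow μ n od σ a ≤ (μ Set.univ).toReal :=
  ENNReal.toReal_mono (measure_ne_top μ _) (measure_mono (Set.subset_univ _))

variable [NeZero n]

/-- The `δ`-terms add at most `1 / 2` to a route cost, which the gap
`exp (u + 1) - exp u ≥ 1` around the threshold absorbs. -/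
theorem isEquilibrium_switchCost (od : I → ZMod n × ZMod n) (hod : ∀ i, (od i).1 ≠ (od i).2)
    (σ : I → Bool) (g : I → ZMod n × Bool) (u : I → ℝ)
    (hg : ∀ i, routeDir n (od i).1 (od i).2 (g i).1 = (g i).2) (hu : ∀ i, 0 ≤ u i)
    (hflow : ∀ i, flow μ n od σ (g i) = if σ i = (g i).2 then u i else u i + 1) :
    IsEquilibrium μ n od
      (fun i => switchCost n (od i) (g i) (u i) (4 * n * exp (μ Set.univ).toReal)⁻¹) σ := by
  intro i b
  set f := flow μ n od σ
  set δ := (4 * n * exp (μ Set.univ).toReal)⁻¹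
  have hsmall (S : Finset (ZMod n × Bool)) :
      0 ≤ δ * ∑ a ∈ S, exp (f a) ∧ δ * ∑ a ∈ S, exp (f a) ≤ 1 / 2 :=
    ⟨by positivity, mul_sum_exp_le_half (flow_le_measure_univ μ od σ) S⟩
  have hgap := exp_add_one_le_exp_add_one (hu i)
  have hgi : g i ∈ routeArcs n (od i) (g i).2 := (mem_routeArcs (hod i)).mpr ⟨rfl, hg i⟩
  simp only [routeCost_eq_sum]
  rcases Bool.eq_or_eq_not b (σ i) with rfl | rfl
  · exact le_rfl
  by_cases hσg : σ i = (g i).2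
  · rw [hσg, sum_switchCost_self hgi, sum_switchCost_not (hod i), ← hσg, hflow, if_pos hσg]
    linarith [hsmall ((routeArcs n (od i) (σ i)).erase (g i)),
      hsmall (routeArcs n (od i) (!σ i))]
  · have hflow_i := hflow i
    rw [if_neg hσg] at hflow_i
    rw [(Bool.eq_or_eq_not _ _).resolve_left hσg, Bool.not_not, sum_switchCost_self hgi,
      sum_switchCost_not (hod i), hflow_i]
    linarith [hsmall ((routeArcs n (od i) (g i).2).erase (g i)),
      hsmall (routeArcs n (od i) (!(g i).2))]

theorem not_uniquenessProperty_of_switch {L : Finset (ZMod n × ZMod n)}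
    (od : I → ZMod n × ZMod n) (hodL : ∀ i, od i ∈ L) (hod : ∀ i, (od i).1 ≠ (od i).2)
    {σ σ' : I → Bool} (hσ : ∀ a, MeasurableSet {i | inRoute n (od i).1 (od i).2 (σ i) a})
    (hσ' : ∀ a, MeasurableSet {i | inRoute n (od i).1 (od i).2 (σ' i) a})
    (g : I → ZMod n × Bool) (u : I → ℝ)
    (hg : ∀ i, routeDir n (od i).1 (od i).2 (g i).1 = (g i).2) (hu : ∀ i, 0 ≤ u i)
    (hflow : ∀ i, flow μ n od σ (g i) = if σ i = (g i).2 then u i else u i + 1)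
    (hflow' : ∀ i, flow μ n od σ' (g i) = if σ' i = (g i).2 then u i else u i + 1)
    {i₀ : I} (hi₀ : σ i₀ ≠ σ' i₀) : ¬ UniquenessProperty n L := by
  intro huniq
  have hδ : (0 : ℝ) < (4 * n * exp (μ Set.univ).toReal)⁻¹ := by
    have : (0 : ℝ) < n := by exact_mod_cast Nat.pos_of_neZero n
    positivity
  have heq := huniq I _ μ inferInstance od hodL _
    (fun i a => switchCost_strictMono hδ a) (fun i a => switchCost_continuous a)
    (fun i a => switchCost_nonneg hδ.le a) σ σ' hσ hσ'
    (isEquilibrium_switchCost μ od hod σ g u hg hu hflow)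
    (isEquilibrium_switchCost μ od hod σ' g u hg hu hflow') (g i₀)
  rw [hflow, hflow'] at heq
  split_ifs at heq with h h' h'
  · exact hi₀ (h.trans h'.symm)
  · linarith
  · linarith
  · exact hi₀ (((Bool.eq_or_eq_not _ _).resolve_left h).trans
      ((Bool.eq_or_eq_not _ _).resolve_left h').symm)

end Equilibrium

theorem flow_sum_smul_dirac {n : ℕ} {I : Type} [Fintype I] [MeasurableSpace I]
    [MeasurableSingletonClass I] (w : I → ℝ≥0) (od : I → ZMod n × ZMod n) (σ : I → Bool)
    (a : ZMod n × Bool) :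
    flow (∑ i, w i • Measure.dirac i) n od σ a
      = ∑ i, if inRoute n (od i).1 (od i).2 (σ i) a then (w i : ℝ) else 0 := by
  simp only [flow, Measure.finsetSum_apply, Measure.smul_apply, Measure.dirac_apply]
  rw [ENNReal.toReal_sum fun i _ => by simp [Set.indicator_apply]; split_ifs <;> simp]
  simp [Set.indicator_apply, apply_ite ENNReal.toReal]

/-- Users `0, 1, 2` of weights `3, 2, 2` travel between `p₀, p₁, p₂`. In `σ` user `0` takes
direction `s` and the others the opposite one; `σ'` reverses every choice. The designated arc of
user `0` is `(v₀, s)`; that of user `1` (resp. `2`) is the arc, in `p₀`'s direction, of an edge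
where `p₂` (resp. `p₁`) is the odd one out. -/
theorem not_uniquenessProperty_of_isPivot {n : ℕ} [NeZero n] {L : Finset (ZMod n × ZMod n)}
    (hL : ∀ ℓ ∈ L, ℓ.1 ≠ ℓ.2) {p₀ p₁ p₂ : ZMod n × ZMod n} (h₀ : p₀ ∈ L) (h₁ : p₁ ∈ L)
    (h₂ : p₂ ∈ L) {v₀ : ZMod n} {s : Bool}
    (hv₀ : routeDir n p₀.1 p₀.2 v₀ = s ∧ routeDir n p₁.1 p₁.2 v₀ = s ∧
      routeDir n p₂.1 p₂.2 v₀ = s)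
    (hpivot : IsPivot (routeDir n p₀.1 p₀.2) (routeDir n p₁.1 p₁.2) (routeDir n p₂.1 p₂.2)) :
    ¬ UniquenessProperty n L := by
  let od : Fin 3 → ZMod n × ZMod n := ![p₀, p₁, p₂]
  let μ : Measure (Fin 3) := ∑ i, (![3, 2, 2] i : ℝ≥0) • Measure.dirac i
  let σ : Fin 3 → Bool := fun i => if i = 0 then s else !s
  let σ' : Fin 3 → Bool := fun i => !σ i
  have hodL : ∀ i, od i ∈ L := by simp [Fin.forall_fin_succ, od, h₀, h₁, h₂]
  have hflow (τ : Fin 3 → Bool) (v : ZMod n) (b : Bool) : flow μ n od τ (v, b) =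
      (if b = τ 0 ∧ routeDir n p₀.1 p₀.2 v = τ 0 then 3 else 0) +
      (if b = τ 1 ∧ routeDir n p₁.1 p₁.2 v = τ 1 then 2 else 0) +
      (if b = τ 2 ∧ routeDir n p₂.1 p₂.2 v = τ 2 then 2 else 0) := by
    rw [flow_sum_smul_dirac, Fin.sum_univ_three]
    simp [od, inRoute_iff_routeDir, hL _ h₀, hL _ h₁, hL _ h₂]
  have hodd {x₀ x₁ x₂ : Bool} (h₀ : x₂ ≠ x₀) (h₁ : x₂ ≠ x₁) : x₁ = x₀ ∧ x₂ = !x₀ := by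
    revert h₀ h₁
    cases x₀ <;> cases x₁ <;> cases x₂ <;> decide
  have hwit : ∀ i, ∃ (g : ZMod n × Bool) (u : ℝ), routeDir n (od i).1 (od i).2 g.1 = g.2 ∧
      0 ≤ u ∧ flow μ n od σ g = (if σ i = g.2 then u else u + 1) ∧
      flow μ n od σ' g = (if σ' i = g.2 then u else u + 1) := by
    obtain ⟨hv₀₀, hv₀₁, hv₀₂⟩ := hv₀
    obtain ⟨⟨v₁, hv₁⟩, ⟨v₂, hv₂⟩⟩ := hpivot
    obtain ⟨hagree₁, hflip₁⟩ := hodd hv₁.1 hv₁.2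
    obtain ⟨hagree₂, hflip₂⟩ := hodd hv₂.1 hv₂.2
    intro i
    fin_cases i
    · refine ⟨(v₀, s), 3, hv₀₀, by norm_num, ?_, ?_⟩ <;>
        simp only [hflow, σ, σ', hv₀₀, hv₀₁, hv₀₂] <;> cases s <;> norm_num [Fin.ext_iff]
    · refine ⟨(v₂, routeDir n p₀.1 p₀.2 v₂), 2, hagree₂, by norm_num, ?_, ?_⟩ <;>
        simp only [hflow, σ, σ', hagree₂, hflip₂] <;> cases s <;>
        cases routeDir n p₀.1 p₀.2 v₂ <;> norm_num [Fin.ext_iff]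
    · refine ⟨(v₁, routeDir n p₀.1 p₀.2 v₁), 2, hagree₁, by norm_num, ?_, ?_⟩ <;>
        simp only [hflow, σ, σ', hagree₁, hflip₁] <;> cases s <;>
        cases routeDir n p₀.1 p₀.2 v₁ <;> norm_num [Fin.ext_iff]
  choose g u hg hu hσ hσ' using hwit
  exact not_uniquenessProperty_of_switch μ od hodL (fun i => hL _ (hodL i))
    (fun _ => .of_discrete) (fun _ => .of_discrete) g u hg hu hσ hσ' (i₀ := 0) (by simp [σ'])

theorem card_le_four_of_uniquenessProperty_general (n : ℕ) [NeZero n]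
    (L : Finset (ZMod n × ZMod n)) (hL : ∀ ℓ ∈ L, ℓ.1 ≠ ℓ.2)
    (huniq : UniquenessProperty n L) :
    L.card ≤ 4 := by
  by_contra! hcard
  obtain ⟨s, -, hs⟩ := Finset.exists_lt_card_fiber_of_mul_lt_card_of_maps_to
    (f := fun p : ZMod n × ZMod n => routeDir n p.1 p.2 0) (t := Finset.univ) (n := 2)
    (fun _ _ => Finset.mem_univ _) (by simp; omega)
  obtain ⟨p, hp, q, hq, r, hr, hpq, hpr, hqr⟩ := Finset.two_lt_card.mp hs
  simp only [Finset.mem_filter] at hp hq hr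
  have hdir {a b : ZMod n × ZMod n} (ha : a ∈ L) (hb : b ∈ L) (hab : a ≠ b) :
      routeDir n a.1 a.2 ≠ routeDir n b.1 b.2 :=
    fun h => hab (routeDir_injOn (hL a ha) (hL b hb) h)
  rcases isPivot_or_isPivot_or_isPivot (hdir hp.1 hq.1 hpq) (hdir hp.1 hr.1 hpr)
    (hdir hq.1 hr.1 hqr) with h | h | h
  · exact not_uniquenessProperty_of_isPivot hL hp.1 hq.1 hr.1 ⟨hp.2, hq.2, hr.2⟩ h huniq
  · exact not_uniquenessProperty_of_isPivot hL hq.1 hp.1 hr.1 ⟨hq.2, hp.2, hr.2⟩ h huniq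
  · exact not_uniquenessProperty_of_isPivot hL hr.1 hp.1 hq.1 ⟨hr.2, hp.2, hq.2⟩ h huniq

/-- If the supply graph is a cycle and `(G, H)` has the uniqueness
property, then there are at most four OD-pairs. -/
theorem card_le_four_of_uniquenessProperty (n : ℕ) [NeZero n] (hn : 3 ≤ n)
    (L : Finset (ZMod n × ZMod n)) (hL : ∀ ℓ ∈ L, ℓ.1 ≠ ℓ.2)
    (huniq : UniquenessProperty n L) :
    L.card ≤ 4 :=
  card_le_four_of_uniquenessProperty_general n L hL huniq
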